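/- arXiv:2406.08600 — 2 statements merged into one kernel-verified Lean document; each statement's English description precedes it below -/
import Mathlib

section
/- Let Φ be a Blum measure and let f = {f_i : ℕ → ℕ | i ∈ ℕ} be a family of total functions satisfying conditions (a) and (b) only. Then there exists a total computable function t : ℕ → ℕ such that for every i, f_i(n) ≤ t(n) for all but finitely many n, and C_Φ(t) = ⋃_{i ∈ ℕ} C_Φ(f_i). -/
open Filter

/-- A Blum complexity measure over the alphabet `α` (strings are `List α`), bundled with
an acceptable Gödel numbering `num` of the partial computable functions `List α →. List α`.
`meas e x` is the amount of resource used by the `e`-th program on input `x`. -/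
structure BlumMeasure (α : Type) [Primcodable α] where
  num : ℕ → List α →. List α
  meas : ℕ → List α →. ℕ
  num_partrec : Partrec₂ num
  num_acceptable : ∀ ψ : ℕ → List α →. List α, Partrec₂ ψ →
    ∃ c : ℕ → ℕ, Computable c ∧ ∀ e, num (c e) = ψ e
  meas_partrec : Partrec₂ meas
  dom_iff : ∀ e x, (meas e x).Dom ↔ (num e x).Dom
  meas_decidable : ∃ d : ℕ → List α → ℕ → Bool,
    Computable (fun p : ℕ × List α × ℕ => d p.1 p.2.1 p.2.2) ∧
    ∀ e x m, (d e x m = true ↔ m ∈ meas e x)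

/-- The Blum complexity class `C_Φ(t)`: partial functions `φ_e` with
`Φ(e,x) ≤ t(|x|)` for all but finitely many strings `x`. -/
def BlumClass {α : Type} [Primcodable α] (M : BlumMeasure α) (t : ℕ → ℕ) :
    Set (List α →. List α) :=
  { g | ∃ e, M.num e = g ∧
      ∀ᶠ x in (Filter.cofinite : Filter (List α)), ∃ m ∈ M.meas e x, m ≤ t x.length }

open Classical in
/-- The characteristic function of a language, valued in two fixed symbols `zero`, `one`. -/
noncomputable def chiFun {α : Type} (zero one : α) (L : Set (List α)) :
    List α →. List α :=
  fun x => Part.some (if x ∈ L then [one] else [zero])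

/-- The Blum language class `L_Φ(t)`: languages whose characteristic function lies in `C_Φ(t)`. -/
def BlumLangClass {α : Type} [Primcodable α] (M : BlumMeasure α)
    (zero one : α) (t : ℕ → ℕ) : Set (Set (List α)) :=
  { L | chiFun zero one L ∈ BlumClass M t }

/-- Iterated pairing `⟨x, y₁, …, y_k⟩ = ⟨x, ⟨y₁, …⟩⟩`, with `⟨x⟩ = ⟨x, ε⟩`. -/
def tuple {α : Type} (pair : List α → List α → List α) :
    List α → List (List α) → List α
  | x, [] => pair x []
  | x, [y] => pair x y
  | x, y :: z :: ys => pair x (tuple pair y (z :: ys))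

/-- Alternating block quantification over strings of prescribed lengths;
`b = true` means the next quantifier is `∃`, and quantifiers alternate. -/
def altQuant {α : Type} : Bool → List ℕ → (List (List α) → Prop) → Prop
  | true, n :: ns, P =>
      ∃ y : List α, y.length = n ∧ altQuant false ns fun ys => P (y :: ys)
  | false, n :: ns, P =>
      ∀ y : List α, y.length = n → altQuant true ns fun ys => P (y :: ys)
  | _, [], P => P []

/-- The complexity class operator `Σ_k^F` applied to a class `C` of languages. -/
def SigmaOp {α : Type} (pair : List α → List α → List α) (F : Set (ℕ → ℕ)) (k : ℕ)
    (C : Set (Set (List α))) : Set (Set (List α)) :=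
  { L | ∃ fs : List (ℕ → ℕ), fs.length = k ∧ (∀ f ∈ fs, f ∈ F) ∧ ∃ L' ∈ C,
      ∀ x : List α, x ∈ L ↔
        altQuant true (fs.map fun f => f x.length) fun ys => tuple pair x ys ∈ L' }

/-- The class `Σ_k L_Φ^F(t)`: the resource bound `t(|⟨x⟩|)` is independent of the witnesses. -/
def SigmaClass {α : Type} [Primcodable α] (M : BlumMeasure α)
    (pair : List α → List α → List α) (zero one : α) (F : Set (ℕ → ℕ)) (k : ℕ)
    (t : ℕ → ℕ) : Set (Set (List α)) :=
  { L | ∃ fs : List (ℕ → ℕ), fs.length = k ∧ (∀ f ∈ fs, f ∈ F) ∧ ∃ e : ℕ,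
      (∀ x v, v ∈ M.num e x → v = [zero] ∨ v = [one]) ∧
      (∀ᶠ p in (Filter.cofinite : Filter (List α × List (List α))),
        p.2.length = k →
          ∃ m ∈ M.meas e (tuple pair p.1 p.2), m ≤ t (pair p.1 []).length) ∧
      ∀ x : List α, x ∈ L ↔
        altQuant true (fs.map fun f => f x.length) fun ys =>
          [one] ∈ M.num e (tuple pair x ys) }

/-- A witness criterion `ω = (R₁, h₁, R₂, h₂)`: total computable relations and functions. -/
structure WitnessCriterion where
  R1 : ℕ → ℕ → Bool
  h1 : ℕ → ℕ
  R2 : ℕ → ℕ → Bool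
  h2 : ℕ → ℕ
  R1_comp : Computable₂ R1
  h1_comp : Computable h1
  R2_comp : Computable₂ R2
  h2_comp : Computable h2

/-- Cardinality of the witness set `W(f, L', x)` (with witness length `n = f(|x|)`). -/
noncomputable def wCount {α : Type} (pair : List α → List α → List α)
    (L' : Set (List α)) (n : ℕ) (x : List α) : ℕ :=
  Set.ncard { y : List α | y.length = n ∧ pair x y ∈ L' }

/-- The complexity class operator `W_ω^F` applied to a class `C` of languages. -/
def WOp {α : Type} (pair : List α → List α → List α) (F : Set (ℕ → ℕ))
    (ω : WitnessCriterion) (C : Set (Set (List α))) : Set (Set (List α)) :=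
  { L | ∃ f ∈ F, ∃ L' ∈ C, ∀ x : List α,
      (x ∈ L → ω.R1 (wCount pair L' (f x.length) x) (ω.h1 (f x.length)) = true) ∧
      (x ∉ L → ω.R2 (wCount pair L' (f x.length) x) (ω.h2 (f x.length)) = true) }

/-- The class `W_ω L_Φ^F(t)`: the resource bound `t(|⟨x⟩|)` is independent of the witness. -/
noncomputable def WClass {α : Type} [Primcodable α] (M : BlumMeasure α)
    (pair : List α → List α → List α) (zero one : α) (F : Set (ℕ → ℕ))
    (ω : WitnessCriterion) (t : ℕ → ℕ) : Set (Set (List α)) :=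
  { L | ∃ f ∈ F, ∃ e : ℕ,
      (∀ x v, v ∈ M.num e x → v = [zero] ∨ v = [one]) ∧
      (∀ᶠ p in (Filter.cofinite : Filter (List α × List α)),
        ∃ m ∈ M.meas e (pair p.1 p.2), m ≤ t (pair p.1 []).length) ∧
      ∀ x : List α,
        (x ∈ L →
          ω.R1 (Set.ncard { y : List α | y.length = f x.length ∧
            [one] ∈ M.num e (pair x y) }) (ω.h1 (f x.length)) = true) ∧
        (x ∉ L →
          ω.R2 (Set.ncard { y : List α | y.length = f x.length ∧
            [one] ∈ M.num e (pair x y) }) (ω.h2 (f x.length)) = true) }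

/-- Conditions (a)–(e): `f` (as an indexed family `i ↦ f i`) is an acceptable collection. -/
def AcceptableCollection (f : ℕ → ℕ → ℕ) : Prop :=
  Computable₂ f ∧
  (∀ i j, i ≤ j → ∀ᶠ n in Filter.atTop, f i n ≤ f j n) ∧
  (∀ i, Monotone (f i)) ∧
  (∃ i, ∀ B : ℕ, ∃ n, B < f i n) ∧
  (∀ i (js : List ℕ) (C : ℕ), ∃ k, ∀ᶠ n in Filter.atTop,
      f i (n + (js.map fun j => f j n).sum +
        C * (1 + Nat.log 2 n + (js.dropLast.map fun j => Nat.log 2 (1 + f j n)).sum))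
        ≤ f k n)

/-!
The bound is built by a priority construction. Every program `e` carries a guess, an index
into the family that starts at `e`; whenever `e` exceeds `max_{i ≤ guess} f i` on some input
of length `n`, its guess is raised above `n`. At stage `n` the bound is `max_{i ≤ j} f i n`,
where `j` is the least guess of a program `e ≤ n` that fails at stage `n` (and `j = n` if
there is none). A program with a small guess that keeps failing loses that guess, and new
programs enter with large guesses, so `j` tends to infinity and the bound eventually dominates
every `f i`. Conversely, a program that runs within the bound almost everywhere fails only
finitely often, so its guess settles on some `v` and the program runs within `f v` almost
everywhere. Taking prefix maxima of the family makes the bound monotone in the index and,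
by (b), costs nothing.
-/

namespace Computable

variable {α β : Type*} [Primcodable α] [Primcodable β]

theorem list_any {f : α → List β} {p : α → β → Bool} (hf : Computable f) (hp : Computable₂ p) :
    Computable fun a => (f a).any (p a) := by
  have hget : Computable fun q : α × ℕ => (f q.1)[q.2]? :=
    list_getElem?.comp (hf.comp fst) snd
  have hentry : Computable₂ fun (a : α) (i : ℕ) => ((f a)[i]?).any (p a) := by
    refine (option_casesOn hget (const false) (hp.comp (fst.comp fst) snd).to₂).of_eq fun q => ?_
    cases h : (f q.1)[q.2]? <;> simp [h]
  have hstep : Computable₂ fun (a : α) (q : ℕ × Bool) => q.2 || ((f a)[q.1]?).any (p a) :=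
    Primrec.or.to_comp.comp (snd.comp snd) (hentry.comp fst (fst.comp snd))
  refine (nat_rec (list_length.comp hf) (const false) hstep).of_eq fun a => ?_
  suffices ∀ k, Nat.rec (motive := fun _ => Bool) false
      (fun i acc => acc || ((f a)[i]?).any (p a)) k = ((f a).take k).any (p a) by
    simpa using this (f a).length
  intro k
  induction k with
  | zero => simp
  | succ k ih => cases h : (f a)[k]? <;> simp_all [List.take_add_one]

theorem list_all {f : α → List β} {p : α → β → Bool} (hf : Computable f) (hp : Computable₂ p) :
    Computable fun a => (f a).all (p a) :=
  (Primrec.not.to_comp.comp (list_any hf (Primrec.not.to_comp.comp₂ hp))).of_eq fun _ =>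
    List.all_eq_not_any_not.symm

end Computable

theorem List.mem_sections_replicate {β : Type*} {l x : List β} {n : ℕ} :
    x ∈ (List.replicate n l).sections ↔ x.length = n ∧ ∀ a ∈ x, a ∈ l := by
  rw [List.mem_sections]
  induction n generalizing x with
  | zero => simp +contextual
  | succ n ih => cases x <;> simp [List.replicate_succ, ih, and_left_comm]

theorem Primrec.list_sections_replicate {β : Type*} [Primcodable β] (l : List β) :
    Primrec fun n => (List.replicate n l).sections := by
  have hcons : Primrec₂ fun (x : List β) (a : β) => a :: x := list_cons.comp snd fst
  have hstep : Primrec fun s : List (List β) => s.flatMap fun x => l.map (· :: x) :=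
    list_flatMap .id ((list_map (const l) hcons).comp snd).to₂
  refine (nat_rec₁ [[]] (hstep.comp snd).to₂).of_eq fun n => ?_
  induction n with
  | zero => rfl
  | succ n ih => simp [ih, List.replicate_succ, List.sections]

theorem List.comap_length_atTop (α : Type*) [Finite α] :
    comap (List.length : List α → ℕ) atTop = cofinite := by
  refine le_antisymm ?_ ?_
  · rw [← Nat.cofinite_eq_atTop]
    exact comap_cofinite_le _
  · rw [← tendsto_iff_comap, tendsto_atTop]
    intro N
    simpa [not_le] using List.finite_length_lt α N

namespace BlumMeasure

variable {α : Type} [Primcodable α] (M : BlumMeasure α)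

def RunsWithin (e n B : ℕ) : Prop :=
  ∀ x : List α, x.length = n → ∃ m ∈ M.meas e x, m ≤ B

variable {M} in
theorem RunsWithin.mono {e n B B' : ℕ} (h : M.RunsWithin e n B) (hB : B ≤ B') :
    M.RunsWithin e n B' := fun x hx =>
  let ⟨m, hm, hmB⟩ := h x hx
  ⟨m, hm, hmB.trans hB⟩

theorem mem_blumClass_iff [Finite α] {t : ℕ → ℕ} {g : List α →. List α} :
    g ∈ BlumClass M t ↔ ∃ e, M.num e = g ∧ ∀ᶠ n in atTop, M.RunsWithin e n (t n) := by
  refine exists_congr fun e => and_congr_right fun _ => ?_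
  rw [← List.comap_length_atTop, eventually_comap]
  refine eventually_congr (.of_forall fun n => forall_congr' fun x => ?_)
  exact ⟨fun h hx => hx ▸ h hx, fun h hx => hx ▸ h hx⟩

open Computable in
theorem exists_computable_runsWithin [Finite α] :
    ∃ r : ℕ → ℕ → ℕ → Bool, Computable (fun p : ℕ × ℕ × ℕ => r p.1 p.2.1 p.2.2) ∧
      ∀ e n B, r e n B = true ↔ M.RunsWithin e n B := by
  obtain ⟨d, hd_comp, hd⟩ := M.meas_decidable
  have := Fintype.ofFinite α
  obtain ⟨l, hl⟩ : ∃ l : List α, ∀ a, a ∈ l := ⟨Finset.univ.toList, by simp⟩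
  refine ⟨fun e n B => (List.replicate n l).sections.all fun x => (List.range (B + 1)).any (d e x),
    ?_, fun e n B => ?_⟩
  · have htriple : Computable fun r : ((ℕ × ℕ × ℕ) × List α) × ℕ => (r.1.1.1, r.1.2, r.2) :=
      (fst.comp (fst.comp fst)).pair ((snd.comp fst).pair snd)
    have hd' := hd_comp.comp htriple
    have hrange : Computable fun q : (ℕ × ℕ × ℕ) × List α => List.range (q.1.2.2 + 1) :=
      Primrec.list_range.to_comp.comp (succ.comp (snd.comp (snd.comp fst)))
    exact Computable.list_all
      ((Primrec.list_sections_replicate l).to_comp.comp (fst.comp snd))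
      (Computable.list_any hrange hd'.to₂)
  · simp [RunsWithin, List.mem_sections_replicate, hl, hd, and_comm]

end BlumMeasure

namespace McCreightMeyer

section PrefixMax

variable {f : ℕ → ℕ → ℕ}

def prefixMax (f : ℕ → ℕ → ℕ) (j n : ℕ) : ℕ := (Finset.range (j + 1)).sup (f · n)

theorem le_prefixMax {i j : ℕ} (h : i ≤ j) (n : ℕ) : f i n ≤ prefixMax f j n :=
  Finset.le_sup (f := (f · n)) (Finset.mem_range_succ_iff.2 h)

theorem prefixMax_mono (n : ℕ) : Monotone fun j => prefixMax f j n := fun _ _ h =>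
  Finset.sup_mono (Finset.range_subset_range.2 (Nat.succ_le_succ h))

theorem eventually_prefixMax_le {j : ℕ} (h : ∀ i ≤ j, ∀ᶠ n in atTop, f i n ≤ f j n) :
    ∀ᶠ n in atTop, prefixMax f j n ≤ f j n := by
  filter_upwards [(Finset.range (j + 1)).eventually_all.2 fun i hi =>
    h i (Finset.mem_range_succ_iff.1 hi)] with n hn
  exact Finset.sup_le hn

theorem prefixMax_succ (j n : ℕ) : prefixMax f (j + 1) n = max (prefixMax f j n) (f (j + 1) n) := by
  rw [prefixMax, Finset.range_add_one, Finset.sup_insert, max_comm]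
  rfl

open Computable in
theorem prefixMax_computable (hf : Computable₂ f) : Computable₂ (prefixMax f) := by
  have hstep : Computable₂ fun (p : ℕ × ℕ) (q : ℕ × ℕ) => max q.2 (f (q.1 + 1) p.2) :=
    Primrec.nat_max.to_comp.comp (snd.comp snd) (hf.comp (succ.comp (fst.comp snd)) (snd.comp fst))
  refine (nat_rec fst (hf.comp (const 0) snd) hstep).of_eq fun p => ?_
  induction p.1 with
  | zero => simp [prefixMax]
  | succ j ih => simp only [prefixMax_succ, ← ih]

end PrefixMax

section Guess

-- `ok e n j`: program `e` runs within the `j`-th bound on every input of length `n`.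
variable (ok : ℕ → ℕ → ℕ → Bool)

def guess (e : ℕ) : ℕ → ℕ
  | 0 => e
  | n + 1 => if ok e n (guess e n) then guess e n else max (guess e n) (n + 1)

def minGuess (n : ℕ) : ℕ → ℕ
  | 0 => n
  | k + 1 => if ok k n (guess ok k n) then minGuess n k else min (minGuess n k) (guess ok k n)

def unionIndex (n : ℕ) : ℕ := minGuess ok n (n + 1)

variable {ok}

theorem guess_mono (e : ℕ) : Monotone (guess ok e) := by
  refine monotone_nat_of_le_succ fun n => ?_
  rw [guess]
  split
  · exact le_rfl
  · exact le_max_left _ _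

theorem le_guess (e n : ℕ) : e ≤ guess ok e n :=
  guess_mono e n.zero_le

theorem lt_guess_of_not_ok {e m n : ℕ} (h : ok e m (guess ok e m) = false) (hmn : m < n) :
    m < guess ok e n :=
  calc m < guess ok e (m + 1) := by simp [guess, h]
    _ ≤ guess ok e n := guess_mono e hmn

theorem guess_eq_of_ok {e N : ℕ} (h : ∀ n ≥ N, ok e n (guess ok e n) = true) :
    ∀ n ≥ N, guess ok e n = guess ok e N := by
  intro n hn
  induction n, hn using Nat.le_induction with
  | base => rfl
  | succ n hn ih => rw [guess, if_pos (h n hn), ih]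

theorem le_minGuess_iff {i n k : ℕ} :
    i ≤ minGuess ok n k ↔ i ≤ n ∧ ∀ e < k, ok e n (guess ok e n) = false → i ≤ guess ok e n := by
  induction k with
  | zero => simp [minGuess]
  | succ k ih =>
    rw [minGuess, Nat.forall_lt_succ_right]
    split
    · next hk => simp [ih, hk]
    · next hk => simp [ih, hk, and_assoc]

theorem unionIndex_le_guess {e n : ℕ} (he : e ≤ n) (h : ok e n (guess ok e n) = false) :
    unionIndex ok n ≤ guess ok e n :=
  (le_minGuess_iff.1 le_rfl).2 e (Nat.lt_succ_of_le he) h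

theorem eventually_not_ok_imp_le_guess (e i : ℕ) :
    ∀ᶠ n in atTop, ok e n (guess ok e n) = false → i ≤ guess ok e n := by
  by_cases h : ∃ m ≥ i, ok e m (guess ok e m) = false
  · obtain ⟨m, him, hm⟩ := h
    filter_upwards [eventually_gt_atTop m] with n hn _
    exact him.trans (lt_guess_of_not_ok hm hn).le
  · push Not at h
    filter_upwards [eventually_ge_atTop i] with n hn hfail
    simp [h n hn] at hfail

theorem eventually_le_unionIndex (i : ℕ) : ∀ᶠ n in atTop, i ≤ unionIndex ok n := by
  have hsmall : ∀ᶠ n in atTop, ∀ e < i, ok e n (guess ok e n) = false → i ≤ guess ok e n :=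
    (eventually_all_finite (Set.finite_Iio i)).2 fun e _ => eventually_not_ok_imp_le_guess e i
  filter_upwards [hsmall, eventually_ge_atTop i] with n hn hin
  refine le_minGuess_iff.2 ⟨hin, fun e _ hfail => ?_⟩
  rcases lt_or_ge e i with hei | hei
  · exact hn e hei hfail
  · exact hei.trans (le_guess e n)

theorem exists_eventually_ok (hmono : ∀ e n, Monotone (ok e n)) {e : ℕ}
    (h : ∀ᶠ n in atTop, ok e n (unionIndex ok n) = true) :
    ∃ v, ∀ᶠ n in atTop, ok e n v = true := by
  have hguess : ∀ᶠ n in atTop, ok e n (guess ok e n) = true := by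
    filter_upwards [h, eventually_ge_atTop e] with n hn hen
    by_contra hfail
    exact hfail (Bool.le_iff_imp.1
      (hmono e n (unionIndex_le_guess hen (Bool.eq_false_iff.2 hfail))) hn)
  obtain ⟨N, hN⟩ := eventually_atTop.1 hguess
  exact ⟨guess ok e N, eventually_atTop.2 ⟨N, fun n hn => guess_eq_of_ok hN n hn ▸ hN n hn⟩⟩

open Computable in
theorem guess_computable (hok : Computable fun p : ℕ × ℕ × ℕ => ok p.1 p.2.1 p.2.2) :
    Computable₂ (guess ok) := by
  have hstep : Computable₂ fun (p : ℕ × ℕ) (q : ℕ × ℕ) =>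
      if ok p.1 q.1 q.2 then q.2 else max q.2 (q.1 + 1) := by
    have hargs : Computable fun a : (ℕ × ℕ) × ℕ × ℕ => (a.1.1, a.2) := (fst.comp fst).pair snd
    have hcond := hok.comp hargs
    have := cond hcond (snd.comp snd)
      (Primrec.nat_max.to_comp.comp (snd.comp snd) (succ.comp (fst.comp snd)))
    refine this.of_eq fun a => ?_
    cases h : ok a.1.1 a.2.1 a.2.2 <;> simp [h]
  refine (nat_rec snd fst hstep).of_eq fun p => ?_
  induction p.2 with
  | zero => rfl
  | succ n ih => simp only [guess, ← ih]

open Computable in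
theorem unionIndex_computable (hok : Computable fun p : ℕ × ℕ × ℕ => ok p.1 p.2.1 p.2.2) :
    Computable (unionIndex ok) := by
  have hguess : Computable fun q : ℕ × ℕ × ℕ => guess ok q.2.1 q.1 :=
    (guess_computable hok).comp (fst.comp snd) fst
  have hstep : Computable₂ fun (n : ℕ) (q : ℕ × ℕ) =>
      if ok q.1 n (guess ok q.1 n) then q.2 else min q.2 (guess ok q.1 n) := by
    have hcond := hok.comp ((fst.comp snd).pair (fst.pair hguess))
    have := cond hcond (snd.comp snd) (Primrec.nat_min.to_comp.comp (snd.comp snd) hguess)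
    refine this.of_eq fun a => ?_
    cases h : ok a.2.1 a.1 (guess ok a.2.1 a.1) <;> simp [h]
  refine (nat_rec succ .id hstep).of_eq fun n => ?_
  suffices ∀ k, Nat.rec (motive := fun _ => ℕ) n (fun k acc =>
      if ok k n (guess ok k n) then acc else min acc (guess ok k n)) k = minGuess ok n k from
    this (n + 1)
  intro k
  induction k with
  | zero => rfl
  | succ k ih => simp only [minGuess, ← ih]

end Guess

variable {α : Type} [Primcodable α] {f : ℕ → ℕ → ℕ} {ok : ℕ → ℕ → ℕ → Bool}

def unionBound (f : ℕ → ℕ → ℕ) (ok : ℕ → ℕ → ℕ → Bool) (n : ℕ) : ℕ :=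
  prefixMax f (unionIndex ok n) n

theorem unionBound_computable (hf : Computable₂ f)
    (hok : Computable fun p : ℕ × ℕ × ℕ => ok p.1 p.2.1 p.2.2) :
    Computable (unionBound f ok) :=
  (prefixMax_computable hf).comp (unionIndex_computable hok) .id

theorem eventually_le_unionBound (i : ℕ) : ∀ᶠ n in atTop, f i n ≤ unionBound f ok n := by
  filter_upwards [eventually_le_unionIndex i] with n hn using le_prefixMax hn n

theorem exists_computable_runsWithin_prefixMax [Finite α] (M : BlumMeasure α)
    (hf : Computable₂ f) :
    ∃ ok : ℕ → ℕ → ℕ → Bool, Computable (fun p : ℕ × ℕ × ℕ => ok p.1 p.2.1 p.2.2) ∧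
      ∀ e n j, ok e n j = true ↔ M.RunsWithin e n (prefixMax f j n) := by
  obtain ⟨r, hr_comp, hr⟩ := M.exists_computable_runsWithin
  have hargs : Computable fun p : ℕ × ℕ × ℕ => (p.1, p.2.1, prefixMax f p.2.2 p.2.1) :=
    .pair .fst (.pair (.comp .fst .snd)
      ((prefixMax_computable hf).comp (.comp .snd .snd) (.comp .fst .snd)))
  exact ⟨fun e n j => r e n (prefixMax f j n), (hr_comp.comp hargs :), fun e n j => hr e n _⟩

theorem blumClass_unionBound_eq_iUnion [Finite α] {M : BlumMeasure α}
    (hok : ∀ e n j, ok e n j = true ↔ M.RunsWithin e n (prefixMax f j n))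
    (hb : ∀ i j, i ≤ j → ∀ᶠ n in atTop, f i n ≤ f j n) :
    BlumClass M (unionBound f ok) = ⋃ i, BlumClass M (f i) := by
  have hok_mono : ∀ e n, Monotone (ok e n) := fun e n j j' h => Bool.le_iff_imp.2 fun hj =>
    (hok e n j').2 (((hok e n j).1 hj).mono (prefixMax_mono n h))
  ext g
  simp only [Set.mem_iUnion, M.mem_blumClass_iff]
  constructor
  · rintro ⟨e, rfl, he⟩
    obtain ⟨v, hv⟩ := exists_eventually_ok hok_mono (he.mono fun n hn => (hok e n _).2 hn)
    refine ⟨v, e, rfl, ?_⟩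
    filter_upwards [hv, eventually_prefixMax_le fun i hi => hb i v hi] with n hn hle
    exact ((hok e n v).1 hn).mono hle
  · rintro ⟨i, e, rfl, he⟩
    refine ⟨e, rfl, ?_⟩
    filter_upwards [he, eventually_le_unionBound i] with n hn hi
    exact hn.mono hi

end McCreightMeyer

open McCreightMeyer in
theorem mccreight_meyer_union_general
    (α : Type) [Primcodable α] [Fintype α]
    (M : BlumMeasure α) (f : ℕ → ℕ → ℕ)
    (ha : Computable₂ f)
    (hb : ∀ i j, i ≤ j → ∀ᶠ n in Filter.atTop, f i n ≤ f j n) :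
    ∃ t : ℕ → ℕ, Computable t ∧
      (∀ i, ∀ᶠ n in Filter.atTop, f i n ≤ t n) ∧
      BlumClass M t = ⋃ i, BlumClass M (f i) := by
  obtain ⟨ok, hok_comp, hok⟩ := exists_computable_runsWithin_prefixMax M ha
  exact ⟨unionBound f ok, unionBound_computable ha hok_comp, eventually_le_unionBound,
    blumClass_unionBound_eq_iUnion hok hb⟩

/-- **McCreight–Meyer Union Theorem** (classical form): for any Blum measure `M` and
family `f` satisfying conditions (a) and (b) only, there is a total computable `t`
with `f i ≤ t` a.e. for each `i` and `C_Φ(t) = ⋃ i, C_Φ(f i)`. -/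
theorem mccreight_meyer_union
    (α : Type) [Primcodable α] [Fintype α] (hcard : 2 ≤ Fintype.card α)
    (M : BlumMeasure α) (f : ℕ → ℕ → ℕ)
    (ha : Computable₂ f)
    (hb : ∀ i j, i ≤ j → ∀ᶠ n in Filter.atTop, f i n ≤ f j n) :
    ∃ t : ℕ → ℕ, Computable t ∧
      (∀ i, ∀ᶠ n in Filter.atTop, f i n ≤ t n) ∧
      BlumClass M t = ⋃ i, BlumClass M (f i) :=
  mccreight_meyer_union_general α M f ha hb
end

section
/- The family polylog = {f_i | i ∈ ℕ} with f_i(n) = (⌊log₂ n⌋)^i is an acceptable collection; that is, it satisfies conditions (a)–(e). -/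
/-!
Every polylogarithmically bounded overhead `g` satisfies `g n ≤ n` eventually, because
`(log₂ n) ^ a ≤ 2 ^ (log₂ n) ≤ n` for large `n`. In condition (e) the overhead is a sum of
such terms, so the argument of `f i` is at most `2 n`; its logarithm is then at most
`log₂ n + 1 ≤ (log₂ n) ^ 2`, and `k = 2 i` works.
-/

open Filter

theorem Primrec.nat_pow : Primrec₂ ((· ^ ·) : ℕ → ℕ → ℕ) :=
  Primrec₂.unpaired'.1 Nat.Primrec.pow

theorem Nat.log_eq_findGreatest {b : ℕ} (hb : 1 < b) (n : ℕ) :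
    Nat.log b n = Nat.findGreatest (fun k => b ^ k ≤ n) n := by
  rcases eq_or_ne n 0 with rfl | hn
  · simp
  · refine (Nat.findGreatest_eq_iff.2 ⟨Nat.log_le_self b n,
      fun _ => Nat.pow_log_le_self b (x := n) hn, fun m hm _ hle => ?_⟩).symm
    have := Nat.le_log_of_pow_le hb hle
    omega

theorem Primrec.nat_log {b : ℕ} (hb : 1 < b) : Primrec (Nat.log b) := by
  have hrel : PrimrecRel fun n k : ℕ => b ^ k ≤ n :=
    Primrec.nat_le.comp₂ (Primrec.nat_pow.comp₂ (.const b) Primrec₂.right) Primrec₂.left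
  exact (Primrec.nat_findGreatest Primrec.id hrel).of_eq fun n =>
    (Nat.log_eq_findGreatest hb n).symm

theorem Nat.tendsto_log_atTop {b : ℕ} (hb : 1 < b) : Tendsto (Nat.log b) atTop atTop :=
  tendsto_atTop_atTop_of_monotone Nat.log_monotone fun t => ⟨b ^ t, (Nat.log_pow hb t).ge⟩

theorem Nat.eventually_pow_le_two_pow (a : ℕ) : ∀ᶠ t : ℕ in atTop, t ^ a ≤ 2 ^ t := by
  filter_upwards [(isLittleO_pow_const_const_pow_of_one_lt (R := ℝ) a one_lt_two).bound one_pos]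
    with t ht
  simp only [norm_pow, Real.norm_natCast, Real.norm_ofNat, one_mul] at ht
  exact_mod_cast ht

theorem Nat.log_two_le_sq_log_of_le_two_mul {m n : ℕ} (hn : 4 ≤ n) (hm : m ≤ 2 * n) :
    Nat.log 2 m ≤ Nat.log 2 n ^ 2 := by
  have hlog : 2 ≤ Nat.log 2 n := Nat.le_log_of_pow_le one_lt_two hn
  calc Nat.log 2 m ≤ Nat.log 2 (n * 2) := Nat.log_mono_right (by omega)
    _ = Nat.log 2 n + 1 := Nat.log_mul_base one_lt_two (by omega)
    _ ≤ Nat.log 2 n ^ 2 := by nlinarith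

def PolylogBounded (g : ℕ → ℕ) : Prop :=
  ∃ c a : ℕ, ∀ᶠ n in atTop, g n ≤ c * Nat.log 2 n ^ a

namespace PolylogBounded

theorem log_pow (a : ℕ) : PolylogBounded fun n => Nat.log 2 n ^ a :=
  ⟨1, a, by simp⟩

theorem const (c : ℕ) : PolylogBounded fun _ => c :=
  ⟨c, 0, by simp⟩

variable {g h : ℕ → ℕ}

theorem mono (hh : PolylogBounded h) (hgh : ∀ n, g n ≤ h n) : PolylogBounded g := by
  obtain ⟨c, a, hc⟩ := hh
  exact ⟨c, a, hc.mono fun n hn => (hgh n).trans hn⟩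

theorem add (hg : PolylogBounded g) (hh : PolylogBounded h) :
    PolylogBounded fun n => g n + h n := by
  obtain ⟨c, a, hc⟩ := hg
  obtain ⟨d, b, hd⟩ := hh
  refine ⟨c + d, max a b, ?_⟩
  filter_upwards [hc, hd, eventually_ge_atTop 2] with n hcn hdn hn
  have hlog : 1 ≤ Nat.log 2 n := Nat.le_log_of_pow_le one_lt_two hn
  have ha := Nat.pow_le_pow_right hlog (le_max_left a b)
  have hb := Nat.pow_le_pow_right hlog (le_max_right a b)
  calc g n + h n ≤ c * Nat.log 2 n ^ a + d * Nat.log 2 n ^ b := add_le_add hcn hdn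
    _ ≤ c * Nat.log 2 n ^ max a b + d * Nat.log 2 n ^ max a b := by gcongr
    _ = (c + d) * Nat.log 2 n ^ max a b := (add_mul c d _).symm

theorem const_mul (c : ℕ) (hg : PolylogBounded g) : PolylogBounded fun n => c * g n := by
  obtain ⟨d, a, hd⟩ := hg
  exact ⟨c * d, a, hd.mono fun n hn => by rw [mul_assoc]; exact Nat.mul_le_mul_left c hn⟩

theorem list_sum {α : Type*} (l : List α) {g : α → ℕ → ℕ}
    (hg : ∀ x ∈ l, PolylogBounded (g x)) :
    PolylogBounded fun n => (l.map fun x => g x n).sum := by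
  induction l with
  | nil => simpa using const 0
  | cons x l ih =>
    simpa using (hg x List.mem_cons_self).add (ih fun y hy => hg y (List.mem_cons_of_mem x hy))

theorem eventually_le (hg : PolylogBounded g) : ∀ᶠ n in atTop, g n ≤ n := by
  obtain ⟨c, a, hc⟩ := hg
  filter_upwards [hc, (Nat.tendsto_log_atTop one_lt_two).eventually
    ((Nat.eventually_pow_le_two_pow (a + 1)).and (eventually_ge_atTop c)),
    eventually_ne_atTop 0] with n hcn ⟨hpow, hlog⟩ hn
  calc g n ≤ c * Nat.log 2 n ^ a := hcn
    _ ≤ Nat.log 2 n * Nat.log 2 n ^ a := Nat.mul_le_mul_right _ hlog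
    _ = Nat.log 2 n ^ (a + 1) := (pow_succ' _ a).symm
    _ ≤ 2 ^ Nat.log 2 n := hpow
    _ ≤ n := Nat.pow_log_le_self 2 hn

end PolylogBounded

/-- The polylogarithmic functions `f i n = (⌊log₂ n⌋) ^ i` form an acceptable collection. -/
theorem polylog_acceptable :
    AcceptableCollection (fun i n => (Nat.log 2 n) ^ i) := by
  refine ⟨?computable, ?eventually_mono, ?monotone, ?unbounded, ?closure⟩
  case computable =>
    exact (Primrec.nat_pow.comp ((Primrec.nat_log one_lt_two).comp Primrec.snd)
      Primrec.fst).to₂.to_comp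
  case eventually_mono =>
    intro i j hij
    filter_upwards [eventually_ge_atTop 2] with n hn
    exact Nat.pow_le_pow_right (Nat.le_log_of_pow_le one_lt_two hn) hij
  case monotone =>
    exact fun i a b hab => Nat.pow_le_pow_left (Nat.log_mono_right hab) i
  case unbounded =>
    exact ⟨1, fun B => ⟨2 ^ (B + 1), by simp [Nat.log_pow one_lt_two]⟩⟩
  case closure =>
    intro i js C
    have hoverhead : PolylogBounded fun n => (js.map fun j => Nat.log 2 n ^ j).sum +
        C * (1 + Nat.log 2 n + (js.dropLast.map fun j => Nat.log 2 (1 + Nat.log 2 n ^ j)).sum) :=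
      (PolylogBounded.list_sum js fun j _ => .log_pow j).add <| .const_mul C <|
        ((PolylogBounded.const 1).add (by simpa using PolylogBounded.log_pow 1)).add <|
          .list_sum _ fun j _ => (PolylogBounded.log_pow j).mono fun n =>
            Nat.lt_add_one_iff.1 ((Nat.log_lt_self 2 (by omega)).trans_eq (add_comm _ _))
    refine ⟨2 * i, ?_⟩
    filter_upwards [hoverhead.eventually_le, eventually_ge_atTop 4] with n hle hn
    calc _ ≤ (Nat.log 2 n ^ 2) ^ i :=
          Nat.pow_le_pow_left (Nat.log_two_le_sq_log_of_le_two_mul hn (by omega)) i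
      _ = Nat.log 2 n ^ (2 * i) := (pow_mul _ 2 i).symm
end
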